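/- Let m be a multiset of natural numbers of cardinality n ≥ 1 with (card m) − (sum of the entries of m) = 1, and for each natural number d let m_d denote the multiplicity of d in m. Then the number of well-formed expressions whose underlying multiset is m equals (n − 1)! divided by the product over d of (m_d)! ; equivalently, it equals (1/n) · n!/∏_d (m_d)!. -/

import Mathlib

/-- `C v` is the length of `v` minus the sum of its entries. -/
def C (v : List ℕ) : ℤ := (v.length : ℤ) - (v.sum : ℤ)

/-- A list of natural numbers is a well-formed expression (Polish notation
encoding of an ordered rooted tree by outdegrees) if it is of the form
`d :: (w₁ ++ ⋯ ++ w_d)` where each `wᵢ` is a well-formed expression. -/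
inductive IsWF : List ℕ → Prop
  | node (d : ℕ) (ws : List (List ℕ)) (hlen : ws.length = d)
      (h : ∀ w ∈ ws, IsWF w) : IsWF (d :: ws.flatten)

/-- The `k`-rotation of `s = u ++ v` with `v` of length `k` is `v ++ u`. -/
def krot (k : ℕ) (s : List ℕ) : List ℕ :=
  s.drop (s.length - k) ++ s.take (s.length - k)

/-!
A list `w` is well-formed iff `C w = 1` and `C p ≤ 0` for every proper prefix `p` of `w`.
Cycle lemma: if `C s = 1`, exactly one of the `n` rotations of `s` is well-formed, since two of
them would cut a well-formed list into `u ++ v` with `C u ≤ 0`, `C v ≤ 0` and `C u + C v = 1`.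
So the `n! / ∏ m_d!` arrangements of `m` are the `n` rotations of the well-formed ones.
-/

open scoped Nat

namespace Multiset

variable {α : Type*} [DecidableEq α]

lemma mem_toFinset_lists {m : Multiset α} {l : List α} :
    l ∈ m.lists.toFinset ↔ (l : Multiset α) = m := by
  rw [mem_toFinset, mem_lists_iff, eq_comm]
  rfl

lemma toFinset_lists_eq_biUnion {m : Multiset α} (hm : m ≠ 0) :
    m.lists.toFinset = m.toFinset.biUnion fun a => (m.erase a).lists.toFinset.image (a :: ·) := by
  ext l
  simp only [Finset.mem_biUnion, Finset.mem_image, mem_toFinset_lists]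
  simp only [mem_toFinset]
  constructor
  · rintro rfl
    rcases l with _ | ⟨a, l⟩
    · exact absurd rfl hm
    · exact ⟨a, by simp, l, by simp, rfl⟩
  · rintro ⟨a, ha, l, hl, rfl⟩
    rw [← cons_coe, hl, cons_erase ha]

lemma prod_factorial_count_eq_count_mul {m : Multiset α} {a : α} (ha : a ∈ m) :
    ∏ b ∈ m.toFinset, (m.count b)! =
      m.count a * ∏ b ∈ (m.erase a).toFinset, ((m.erase a).count b)! := by
  have hsupp : ∏ b ∈ (m.erase a).toFinset, ((m.erase a).count b)! =
      ∏ b ∈ m.toFinset, ((m.erase a).count b)! :=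
    Finset.prod_subset (toFinset_subset.mpr (erase_subset a m)) fun b _ hb => by
      rw [count_eq_zero_of_notMem (by simpa using hb), Nat.factorial_zero]
  have hmem : a ∈ m.toFinset := mem_toFinset.mpr ha
  rw [hsupp, ← Finset.mul_prod_erase _ _ hmem, ← Finset.mul_prod_erase _ _ hmem, count_erase_self,
    ← mul_assoc, Nat.mul_factorial_pred (count_ne_zero.mpr ha)]
  congr 1
  exact Finset.prod_congr rfl fun b hb => by rw [count_erase_of_ne (Finset.ne_of_mem_erase hb)]

theorem card_toFinset_lists_mul_prod_factorial (m : Multiset α) :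
    m.lists.toFinset.card * ∏ a ∈ m.toFinset, (m.count a)! = (card m)! := by
  induction hn : card m generalizing m with
  | zero =>
    rw [card_eq_zero.mp hn, ← coe_nil, lists_coe]
    simp
  | succ n ih =>
    have hm : m ≠ 0 := by rintro rfl; simp at hn
    have hfiber : ∀ a ∈ m.toFinset,
        ((m.erase a).lists.toFinset.image (a :: ·)).card * ∏ b ∈ m.toFinset, (m.count b)! =
          m.count a * n ! := by
      intro a ha
      have ha : a ∈ m := mem_toFinset.mp ha
      rw [Finset.card_image_of_injective _ List.cons_injective,
        prod_factorial_count_eq_count_mul ha, mul_left_comm,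
        ih _ (by rw [card_erase_of_mem ha, hn]; rfl)]
    have hdisj : (m.toFinset : Set α).PairwiseDisjoint
        fun a => (m.erase a).lists.toFinset.image (a :: ·) := by
      intro a _ b _ hab
      simp only [Function.onFun, Finset.disjoint_left, Finset.mem_image]
      rintro _ ⟨l, -, rfl⟩ ⟨l', -, h⟩
      exact hab (List.cons_eq_cons.mp h).1.symm
    rw [toFinset_lists_eq_biUnion hm, Finset.card_biUnion hdisj, Finset.sum_mul,
      Finset.sum_congr rfl hfiber, ← Finset.sum_mul, toFinset_sum_count_eq, hn, Nat.factorial_succ]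

end Multiset

lemma C_nil : C [] = 0 := by simp [C]

lemma C_cons (a : ℕ) (t : List ℕ) : C (a :: t) = 1 - a + C t := by simp [C]; ring

lemma C_append (s t : List ℕ) : C (s ++ t) = C s + C t := by simp [C]; ring

lemma C_take_add_C_drop (s : List ℕ) (i : ℕ) : C (s.take i) + C (s.drop i) = C s := by
  rw [← C_append, List.take_append_drop]

def IsWFForest (k : ℕ) (t : List ℕ) : Prop :=
  ∃ ws : List (List ℕ), ws.length = k ∧ (∀ w ∈ ws, IsWF w) ∧ ws.flatten = t

lemma IsWF.ne_nil {w : List ℕ} (h : IsWF w) : w ≠ [] := by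
  cases h; simp

lemma isWF_iff_isWFForest_one {w : List ℕ} : IsWF w ↔ IsWFForest 1 w := by
  constructor
  · intro h
    exact ⟨[w], rfl, by simpa using h, by simp⟩
  · rintro ⟨ws, hlen, hwf, rfl⟩
    obtain ⟨w, rfl⟩ := List.length_eq_one_iff.mp hlen
    simpa using hwf

lemma isWFForest_nil_iff {k : ℕ} : IsWFForest k [] ↔ k = 0 := by
  constructor
  · rintro ⟨ws, rfl, hwf, hnil⟩
    rw [List.length_eq_zero_iff]
    by_contra hws
    obtain ⟨w, hw⟩ := List.exists_mem_of_ne_nil ws hws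
    exact (hwf w hw).ne_nil (List.flatten_eq_nil_iff.mp hnil w hw)
  · rintro rfl
    exact ⟨[], rfl, by simp, rfl⟩

lemma not_isWFForest_zero_cons (a : ℕ) (t : List ℕ) : ¬ IsWFForest 0 (a :: t) := by
  rintro ⟨ws, hlen, -, hws⟩
  simp [List.length_eq_zero_iff.mp hlen] at hws

-- Removing the root `a` of the first tree leaves its `a` subtrees in front of the other trees.
lemma isWFForest_succ_cons_iff {k a : ℕ} {t : List ℕ} :
    IsWFForest (k + 1) (a :: t) ↔ IsWFForest (a + k) t := by
  constructor
  · rintro ⟨_ | ⟨w, ws⟩, hlen, hwf, hflat⟩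
    · simp at hlen
    obtain ⟨d, cs, hcs, hcswf⟩ := hwf w (by simp)
    simp only [List.flatten_cons, List.cons_append, List.cons.injEq] at hflat
    obtain ⟨rfl, rfl⟩ := hflat
    refine ⟨cs ++ ws, by simp_all, ?_, by simp⟩
    simp only [List.mem_append]
    rintro v (hv | hv)
    exacts [hcswf v hv, hwf v (by simp [hv])]
  · rintro ⟨ws, hlen, hwf, rfl⟩
    refine ⟨(a :: (ws.take a).flatten) :: ws.drop a, by simp; omega, ?_, ?_⟩
    · simp only [List.mem_cons]
      rintro v (rfl | hv)
      · exact IsWF.node a _ (by simp; omega) fun v hv => hwf v (List.mem_of_mem_take hv)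
      · exact hwf v (List.mem_of_mem_drop hv)
    · rw [List.flatten_cons, List.cons_append, ← List.flatten_append, List.take_append_drop]

lemma isWFForest_iff {k : ℕ} {t : List ℕ} :
    IsWFForest k t ↔ C t = k ∧ ∀ j < t.length, C (t.take j) < k := by
  induction t generalizing k with
  | nil => simp [isWFForest_nil_iff, C_nil, eq_comm]
  | cons a t ih =>
    rcases k with _ | k
    · simp only [not_isWFForest_zero_cons, false_iff]
      rintro ⟨-, h⟩
      simpa [C_nil] using h 0 (by simp)
    rw [isWFForest_succ_cons_iff, ih, C_cons, List.length_cons, Nat.forall_lt_succ_left]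
    simp only [List.take_zero, C_nil, List.take_succ_cons, C_cons]
    push_cast
    constructor
    · rintro ⟨h1, h2⟩
      exact ⟨by omega, by omega, fun j hj => by have := h2 j hj; omega⟩
    · rintro ⟨h1, -, h2⟩
      exact ⟨by omega, fun j hj => by have := h2 j hj; omega⟩

lemma isWF_iff {w : List ℕ} : IsWF w ↔ C w = 1 ∧ ∀ j < w.length, C (w.take j) ≤ 0 := by
  rw [isWF_iff_isWFForest_one, isWFForest_iff]
  exact and_congr_right fun _ => forall₂_congr fun _ _ => by omega

lemma IsWF.rotate_mod_eq_zero {w : List ℕ} {k : ℕ} (hw : IsWF w) (hr : IsWF (w.rotate k)) :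
    k % w.length = 0 := by
  have hpos : 0 < w.length := List.length_pos_iff.mpr hw.ne_nil
  set i := k % w.length with hi
  have hin : i < w.length := Nat.mod_lt _ hpos
  by_contra hi0
  rw [← List.rotate_mod, ← hi, List.rotate_eq_drop_append_take hin.le] at hr
  have htake : C (w.take i) ≤ 0 := (isWF_iff.mp hw).2 i hin
  have hdrop : C (w.drop i) ≤ 0 := by
    have h := (isWF_iff.mp hr).2 (w.drop i).length (by simp; omega)
    rwa [List.take_left' rfl] at h
  have := C_take_add_C_drop w i
  have := (isWF_iff.mp hw).1
  omega

lemma exists_le_forall_le_and_forall_lt_lt {β : Type*} [LinearOrder β] (f : ℕ → β) (n : ℕ) :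
    ∃ i ≤ n, (∀ j ≤ n, f j ≤ f i) ∧ ∀ j < i, f j < f i := by
  classical
  have hmax : ∃ i, i ≤ n ∧ ∀ j ≤ n, f j ≤ f i := by
    obtain ⟨i, hi, h⟩ := (Finset.range (n + 1)).exists_max_image f ⟨0, by simp⟩
    exact ⟨i, by simpa [Nat.lt_succ_iff] using hi, fun j hj => h j (by simp; omega)⟩
  obtain ⟨hle, hmaxi⟩ := Nat.find_spec hmax
  refine ⟨Nat.find hmax, hle, hmaxi, fun j hj => lt_of_le_of_ne (hmaxi j (by omega)) ?_⟩
  intro hfj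
  exact Nat.find_min hmax hj ⟨by omega, fun l hl => hfj ▸ hmaxi l hl⟩

-- Rotate just after the first maximum of `j ↦ C (s.take j)`.
lemma exists_isWF_rotate {s : List ℕ} (hs : C s = 1) : ∃ k, IsWF (s.rotate k) := by
  obtain ⟨i, hin, hmax, hfirst⟩ :=
    exists_le_forall_le_and_forall_lt_lt (fun j => C (s.take j)) s.length
  refine ⟨i, isWF_iff.mpr ⟨?_, fun j hj => ?_⟩⟩
  · rw [List.rotate_eq_drop_append_take hin, C_append, add_comm, C_take_add_C_drop, hs]
  rw [List.length_rotate] at hj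
  rw [List.rotate_eq_drop_append_take hin, List.take_append, List.length_drop]
  have hsplit := C_take_add_C_drop s i
  by_cases hj' : j ≤ s.length - i
  · have h := hmax (i + j) (by omega)
    rw [Nat.sub_eq_zero_of_le hj', List.take_zero, List.append_nil]
    rw [List.take_add, C_append] at h
    omega
  · have h := hfirst (j - (s.length - i)) (by omega)
    rw [List.take_of_length_le (by simp; omega), List.take_take, min_eq_left (by omega),
      C_append]
    omega

lemma IsWF.eq_of_rotate_eq {w w' : List ℕ} {k k' : ℕ} (hw : IsWF w) (hw' : IsWF w')
    (hk : k < w.length) (hk' : k' < w'.length) (h : w.rotate k = w'.rotate k') :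
    k = k' ∧ w = w' := by
  have hlen : w'.length = w.length := by simpa using congrArg List.length h.symm
  have hw'_eq : w' = w.rotate (k + (w.length - k')) := by
    rw [← List.rotate_rotate, h, List.rotate_rotate, Nat.add_sub_cancel' (by omega), ← hlen,
      List.rotate_length]
  have hmod := hw.rotate_mod_eq_zero (hw'_eq ▸ hw')
  have hkk : k = k' := by
    rcases le_or_gt k' k with hle | hlt
    · rw [Nat.mod_eq_sub_mod (by omega), Nat.mod_eq_of_lt (by omega)] at hmod
      omega
    · rw [Nat.mod_eq_of_lt (by omega)] at hmod
      omega
  subst hkk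
  exact ⟨rfl, List.rotate_eq_rotate.mp h⟩

lemma C_eq_of_coe_eq {m : Multiset ℕ} {s : List ℕ} (hs : (s : Multiset ℕ) = m) :
    C s = (Multiset.card m : ℤ) - m.sum := by
  subst hs
  simp [C]

-- `(k, w) ↦ w.rotate k` is a bijection from `range (card m) × {w well-formed}` onto the
-- arrangements of `m`.
theorem Multiset.card_toFinset_lists_eq_card_mul_ncard_isWF {m : Multiset ℕ}
    (hC : (Multiset.card m : ℤ) - m.sum = 1) :
    m.lists.toFinset.card =
      Multiset.card m * {w : List ℕ | (w : Multiset ℕ) = m ∧ IsWF w}.ncard := by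
  classical
  set W := m.lists.toFinset.filter IsWF
  have hW : {w : List ℕ | (w : Multiset ℕ) = m ∧ IsWF w} = ↑W := by
    ext w
    simp only [W, Finset.coe_filter, Multiset.mem_toFinset_lists]
  have hlen : ∀ w ∈ W, w.length = Multiset.card m := fun w hw => by
    rw [← (Multiset.mem_toFinset_lists.mp (Finset.mem_filter.mp hw).1), Multiset.coe_card]
  have himage : ((Finset.range (Multiset.card m)) ×ˢ W).image (fun p => p.2.rotate p.1) =
      m.lists.toFinset := by
    ext s
    simp only [Finset.mem_image, Finset.mem_product, Finset.mem_range, Prod.exists, W,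
      Finset.mem_filter, Multiset.mem_toFinset_lists]
    constructor
    · rintro ⟨k, w, ⟨-, rfl, -⟩, rfl⟩
      exact Multiset.coe_eq_coe.mpr (List.rotate_perm w k)
    · intro hs
      obtain ⟨k, hk⟩ := exists_isWF_rotate ((C_eq_of_coe_eq hs).trans hC)
      obtain ⟨j, hj⟩ : s.rotate k ~r s := List.IsRotated.symm ⟨k, rfl⟩
      have hrlen : (s.rotate k).length = Multiset.card m := by simp [← hs]
      refine ⟨j % Multiset.card m, s.rotate k, ⟨?_, ?_, hk⟩, by rwa [← hrlen, List.rotate_mod]⟩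
      · exact Nat.mod_lt _ (hrlen ▸ List.length_pos_iff.mpr hk.ne_nil)
      · rw [← hs]
        exact Multiset.coe_eq_coe.mpr (List.rotate_perm s k)
  rw [hW, Set.ncard_coe_finset, ← himage, Finset.card_image_of_injOn, Finset.card_product,
    Finset.card_range]
  rintro ⟨k, w⟩ hkw ⟨k', w'⟩ hkw' h
  simp only [Finset.mem_coe, Finset.mem_product, Finset.mem_range] at hkw hkw'
  obtain ⟨hk, hw⟩ := hkw
  obtain ⟨hk', hw'⟩ := hkw'
  obtain ⟨rfl, rfl⟩ := IsWF.eq_of_rotate_eq (Finset.mem_filter.mp hw).2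
    (Finset.mem_filter.mp hw').2 (hlen w hw ▸ hk) (hlen w' hw' ▸ hk') h
  rfl

theorem stmt_12 (m : Multiset ℕ) (n : ℕ) (hn : Multiset.card m = n) (hn1 : 1 ≤ n)
    (hC : (Multiset.card m : ℤ) - (m.sum : ℤ) = 1) :
    {w : List ℕ | (↑w : Multiset ℕ) = m ∧ IsWF w}.ncard
        * ∏ d ∈ m.toFinset, (m.count d).factorial
      = (n - 1).factorial := by
  subst hn
  apply Nat.eq_of_mul_eq_mul_left hn1
  rw [← mul_assoc, ← Multiset.card_toFinset_lists_eq_card_mul_ncard_isWF hC,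
    Multiset.card_toFinset_lists_mul_prod_factorial, Nat.mul_factorial_pred (by omega)]
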